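/- Call a sequence (U_n)_{n≥1} of nonnegative integers exactly realizable if for every n ≥ 1 the sum ∑_{d ∣ n} μ(n/d) U_d is nonnegative and divisible by n. If a, b are positive integers and U_1 = a, U_2 = b, U_{n+2} = U_{n+1} + U_n defines an exactly realizable sequence, then b = 3a. -/

import Mathlib

/-!
Subtracting `a` times the Lucas sequence leaves a Fibonacci-recurrent sequence vanishing at `1`,
so `U n = a L_n + (b - 3a) F_{n-1}`. At `n = 2^(k+1)` only two Möbius terms survive and
realizability says `2^(k+1) ∣ U_{2^(k+1)} - U_{2^k}`. The Lucas part of this difference is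
divisible by `2^(k+1)`, because `L_{2m} = L_m² - 2` for even `m` forces `L_{2^k} ≡ -1` modulo
`2^(k+1)`; the Fibonacci part `F_{2^(k+1)-1} - F_{2^k-1}` is odd, since `F_n` is even exactly
when `3 ∣ n`. Hence `2^(k+1) ∣ b - 3a` for every `k`.
-/

open Finset ArithmeticFunction Real
open Nat (fib fib_add_two fib_two_mul_add_one)
open scoped goldenRatio

theorem sum_divisors_prime_pow_succ_moebius_mul {R : Type*} [Ring R] {p : ℕ} (hp : p.Prime)
    (f : ℕ → R) (k : ℕ) :
    ∑ d ∈ (p ^ (k + 1)).divisors, (moebius (p ^ (k + 1) / d) : R) * f d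
      = f (p ^ (k + 1)) - f (p ^ k) := by
  have hμ : ∀ i ∈ range (k + 2), (moebius (p ^ (k + 1) / p ^ i) : R) * f (p ^ i)
      = (moebius (p ^ (k + 1 - i)) : R) * f (p ^ i) := fun i hi ↦ by
    rw [Nat.pow_div (by simpa [Nat.lt_succ_iff] using hi) hp.pos]
  have hvanish : ∀ i ∈ range k, (moebius (p ^ (k + 1 - i)) : R) * f (p ^ i) = 0 := by
    intro i hi
    rw [mem_range] at hi
    rw [moebius_apply_prime_pow hp (by omega), if_neg (by omega), Int.cast_zero, zero_mul]
  rw [Nat.sum_divisors_prime_pow hp, sum_congr rfl hμ, sum_range_succ, sum_range_succ,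
    sum_eq_zero hvanish, Nat.sub_self, Nat.add_sub_cancel_left, pow_one, pow_zero,
    moebius_apply_prime hp, moebius_apply_one]
  simp only [Int.cast_neg, Int.cast_one]
  noncomm_ring

theorem eq_of_fib_recurrence {R : Type*} [Add R] {u v : ℕ → R}
    (hu : ∀ n, u (n + 2) = u (n + 1) + u n) (hv : ∀ n, v (n + 2) = v (n + 1) + v n)
    (h0 : u 0 = v 0) (h1 : u 1 = v 1) : u = v := by
  funext n
  induction n using Nat.twoStepInduction with
  | zero => exact h0
  | one => exact h1
  | more n ihn ihn1 => rw [hu, hv, ihn, ihn1]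

theorem Nat.even_fib_iff_three_dvd : ∀ n, Even (fib n) ↔ 3 ∣ n
  | 0 => by simp
  | 1 => by simp
  | 2 => by simp
  | n + 3 => by
    rw [fib_add_two, fib_add_two (n := n), Nat.dvd_add_self_right,
      ← Nat.even_fib_iff_three_dvd n, add_left_comm, ← two_mul]
    simp [Nat.even_add]

theorem odd_fib_two_mul_add_one_sub_fib {n : ℕ} (h : Odd (fib (n + 1))) :
    Odd ((fib (2 * n + 1) : ℤ) - fib n) := by
  have hsplit : (fib (2 * n + 1) : ℤ) - fib n = fib (n + 1) ^ 2 + fib n * (fib n - 1) := by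
    rw [fib_two_mul_add_one]; push_cast; ring
  rw [hsplit]
  exact (h.pow.natCast).add_even (Int.even_mul_pred_self _)

def lucas : ℕ → ℤ
  | 0 => 2
  | 1 => 1
  | n + 2 => lucas (n + 1) + lucas n

theorem lucas_add_two (n : ℕ) : lucas (n + 2) = lucas (n + 1) + lucas n := rfl

theorem coe_lucas_eq (n : ℕ) : (lucas n : ℝ) = φ ^ n + ψ ^ n := by
  refine congrFun (eq_of_fib_recurrence (u := fun n ↦ (lucas n : ℝ))
    (v := fun n ↦ φ ^ n + ψ ^ n) (fun n ↦ ?_) (fun n ↦ ?_) ?_ ?_) n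
  · simp [lucas_add_two]
  · linear_combination φ ^ n * goldenRatio_sq + ψ ^ n * goldenConj_sq
  · norm_num [lucas]
  · simp [lucas, goldenRatio_add_goldenConj]

theorem lucas_two_mul (n : ℕ) : lucas (2 * n) = lucas n ^ 2 - 2 * (-1) ^ n := by
  have h : (lucas (2 * n) : ℝ) = lucas n ^ 2 - 2 * (-1) ^ n := by
    rw [coe_lucas_eq, coe_lucas_eq, ← goldenRatio_mul_goldenConj, mul_pow]
    ring
  exact_mod_cast h

theorem lucas_two_pow_succ {k : ℕ} (hk : 1 ≤ k) :
    lucas (2 ^ (k + 1)) = lucas (2 ^ k) ^ 2 - 2 := by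
  rw [pow_succ', lucas_two_mul, (Nat.even_pow.2 ⟨even_two, by omega⟩).neg_one_pow]
  ring

theorem two_pow_succ_dvd_lucas_two_pow_add_one {k : ℕ} (hk : 1 ≤ k) :
    (2 : ℤ) ^ (k + 1) ∣ lucas (2 ^ k) + 1 := by
  induction k, hk using Nat.le_induction with
  | base => norm_num [lucas]
  | succ k hk ih =>
    obtain ⟨t, ht⟩ := ih
    refine ⟨2 ^ k * t ^ 2 - t, ?_⟩
    rw [lucas_two_pow_succ hk]
    linear_combination (lucas (2 ^ k) - 1 + 2 ^ (k + 1) * t) * ht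

theorem two_pow_succ_dvd_lucas_two_pow_succ_sub (k : ℕ) :
    (2 : ℤ) ^ (k + 1) ∣ lucas (2 ^ (k + 1)) - lucas (2 ^ k) := by
  rcases Nat.eq_zero_or_pos k with rfl | hk
  · norm_num [lucas]
  · rw [lucas_two_pow_succ hk, show ∀ x : ℤ, x ^ 2 - 2 - x = (x + 1) * (x - 2) by intro; ring]
    exact (two_pow_succ_dvd_lucas_two_pow_add_one hk).mul_right _

theorem odd_fib_two_pow_succ_sub_one_sub (k : ℕ) :
    Odd ((fib (2 ^ (k + 1) - 1) : ℤ) - fib (2 ^ k - 1)) := by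
  have hk : 2 ^ k - 1 + 1 = 2 ^ k := Nat.sub_add_cancel Nat.one_le_two_pow
  rw [show 2 ^ (k + 1) - 1 = 2 * (2 ^ k - 1) + 1 by omega]
  refine odd_fib_two_mul_add_one_sub_fib ?_
  rw [hk, ← Nat.not_even_iff_odd, Nat.even_fib_iff_three_dvd]
  exact fun h ↦ absurd (Nat.prime_three.dvd_of_dvd_pow h) (by norm_num)

theorem eq_mul_lucas_add_mul_fib {U : ℕ → ℤ}
    (hrec : ∀ n, 1 ≤ n → U (n + 2) = U (n + 1) + U n) {n : ℕ} (hn : 1 ≤ n) :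
    U n = U 1 * lucas n + (U 2 - 3 * U 1) * fib (n - 1) := by
  obtain ⟨n, rfl⟩ := Nat.exists_eq_add_of_le' hn
  refine congrFun (eq_of_fib_recurrence (u := fun n ↦ U (n + 1))
    (v := fun n ↦ U 1 * lucas (n + 1) + (U 2 - 3 * U 1) * fib n)
    (fun n ↦ hrec (n + 1) (by omega)) (fun n ↦ ?_) ?_ ?_) n
  · simp only [lucas_add_two (n + 1), fib_add_two]
    push_cast
    ring
  · simp [lucas]
  · simp only [lucas, Nat.fib_one, Nat.cast_one]
    ring

theorem realizable_fib_recurrence_general (a b : ℕ)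
    (U : ℕ → ℕ) (hU1 : U 1 = a) (hU2 : U 2 = b)
    (hrec : ∀ n, 1 ≤ n → U (n + 2) = U (n + 1) + U n)
    (hreal : ∀ n, 1 ≤ n →
      0 ≤ ∑ d ∈ n.divisors, (ArithmeticFunction.moebius (n / d) : ℤ) * (U d : ℤ) ∧
      (n : ℤ) ∣ ∑ d ∈ n.divisors, (ArithmeticFunction.moebius (n / d) : ℤ) * (U d : ℤ)) :
    b = 3 * a := by
  set c : ℤ := b - 3 * a
  have hU : ∀ n, 1 ≤ n → (U n : ℤ) = a * lucas n + c * fib (n - 1) := fun n hn ↦ by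
    simpa [hU1, hU2] using eq_mul_lucas_add_mul_fib (U := fun n ↦ (U n : ℤ))
      (fun n hn ↦ by simp [hrec n hn]) hn
  have hsplit (k : ℕ) : (U (2 ^ (k + 1)) : ℤ) - U (2 ^ k)
      = a * (lucas (2 ^ (k + 1)) - lucas (2 ^ k))
        + c * (fib (2 ^ (k + 1) - 1) - fib (2 ^ k - 1)) := by
    rw [hU _ Nat.one_le_two_pow, hU _ Nat.one_le_two_pow]
    ring
  have hdvd (k : ℕ) : (2 : ℤ) ^ (k + 1) ∣ c := by
    have hstep := (hreal (2 ^ (k + 1)) Nat.one_le_two_pow).2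
    have hmob := sum_divisors_prime_pow_succ_moebius_mul Nat.prime_two (fun d ↦ (U d : ℤ)) k
    simp only [Int.cast_id] at hmob
    rw [hmob, hsplit] at hstep
    push_cast at hstep
    have hlucas := (two_pow_succ_dvd_lucas_two_pow_succ_sub k).mul_left (a : ℤ)
    have hcop : IsCoprime ((2 : ℤ) ^ (k + 1)) (fib (2 ^ (k + 1) - 1) - fib (2 ^ k - 1)) :=
      (Int.isCoprime_two_left.2 (odd_fib_two_pow_succ_sub_one_sub k)).pow_left
    exact hcop.dvd_of_dvd_mul_right ((dvd_add_right hlucas).1 hstep)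
  have hc0 : c = 0 := by
    by_contra hne
    obtain ⟨k, hk⟩ := (Int.finiteMultiplicity_iff (a := 2)).2 ⟨by norm_num, hne⟩
    exact hk (hdvd k)
  omega

theorem realizable_fib_recurrence (a b : ℕ) (ha : 0 < a) (hb : 0 < b)
    (U : ℕ → ℕ) (hU1 : U 1 = a) (hU2 : U 2 = b)
    (hrec : ∀ n, 1 ≤ n → U (n + 2) = U (n + 1) + U n)
    (hreal : ∀ n, 1 ≤ n →
      0 ≤ ∑ d ∈ n.divisors, (ArithmeticFunction.moebius (n / d) : ℤ) * (U d : ℤ) ∧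
      (n : ℤ) ∣ ∑ d ∈ n.divisors, (ArithmeticFunction.moebius (n / d) : ℤ) * (U d : ℤ)) :
    b = 3 * a :=
  realizable_fib_recurrence_general a b U hU1 hU2 hrec hreal
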